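/- arXiv:1010.3667 — 3 statements merged into one kernel-verified Lean document; each statement's English description precedes it below -/
import Mathlib

section
/- Let n ≥ 2 and let φ = (φ₁,…,φ_n) be an automorphism of the unit ball 𝔹_n ⊂ ℂⁿ such that φ maps 𝔹_n ∩ (ℂ∖{0})ⁿ into (ℂ∖{0})ⁿ. Then there exist a permutation σ of {1,…,n} and ζ₁,…,ζ_n ∈ 𝕋 such that φ(z₁,…,z_n) = (ζ₁z_{σ(1)}, …, ζ_n z_{σ(n)}) for all z ∈ 𝔹_n. -/
/-!
The inverse `ψ` of `φ` maps every coordinate hyperplane `{z_k = 0}` into the union of the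
coordinate hyperplanes, so by the identity theorem into a single one, `{w_{τ k} = 0}`. The
derivative of `ψ` at `0` is invertible and its `τ k`-th row vanishes off the `k`-th column,
which forces `τ` to be a permutation; hence `ψ 0 = 0`. By the Schwarz lemma and its equality
case, an automorphism of the ball fixing the origin is a linear isometry, and a linear isometry
preserving the coordinate hyperplanes in this way permutes the coordinates and rotates each.
-/

open Finset

/-- The symmetrization map `π_n : ℂⁿ → ℂⁿ`, whose `k`-th component is the
`(k+1)`-st elementary symmetric polynomial of the coordinates. -/
noncomputable def piMap (n : ℕ) (z : Fin n → ℂ) : Fin n → ℂ :=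
  fun k => ∑ s ∈ Finset.powersetCard (k.1 + 1) Finset.univ, ∏ j ∈ s, z j

/-- The generalized complex ellipsoid `𝔹_{p,n} = {z : ∑ |z_j|^(2p) < 1}`. -/
noncomputable def ellipsoid (p : ℝ) (n : ℕ) : Set (Fin n → ℂ) :=
  {z | ∑ j, ‖z j‖ ^ (2 * p) < 1}

/-- The symmetrized `(p,n)`-ellipsoid `𝔼_{p,n} = π_n(𝔹_{p,n})`. -/
noncomputable def symEllipsoid (p : ℝ) (n : ℕ) : Set (Fin n → ℂ) :=
  piMap n '' ellipsoid p n

/-- The Euclidean unit ball in `ℂⁿ`. -/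
def unitBall (n : ℕ) : Set (Fin n → ℂ) :=
  {z | ∑ j, ‖z j‖ ^ 2 < 1}

/-- `f` is a proper holomorphic map from the domain `D` onto (into) the domain `G`:
it is holomorphic on `D`, maps `D` into `G`, and preimages of compact subsets of `G`
are compact. -/
def IsProperHolomorphic {n : ℕ} (f : (Fin n → ℂ) → (Fin n → ℂ))
    (D G : Set (Fin n → ℂ)) : Prop :=
  DifferentiableOn ℂ f D ∧ Set.MapsTo f D G ∧
    ∀ K : Set (Fin n → ℂ), K ⊆ G → IsCompact K → IsCompact (D ∩ f ⁻¹' K)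

/-- `φ` is an automorphism of the domain `D`: a holomorphic bijection of `D` onto
itself with holomorphic inverse. -/
def IsAutomorphismOf {n : ℕ} (φ : (Fin n → ℂ) → (Fin n → ℂ))
    (D : Set (Fin n → ℂ)) : Prop :=
  DifferentiableOn ℂ φ D ∧ Set.BijOn φ D D ∧
    ∃ ψ : (Fin n → ℂ) → (Fin n → ℂ), DifferentiableOn ℂ ψ D ∧ Set.InvOn ψ φ D D

/-- `f : ℂⁿ → ℂⁿ` is a polynomial mapping. -/
def IsPolynomialMap {n : ℕ} (f : (Fin n → ℂ) → (Fin n → ℂ)) : Prop :=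
  ∃ P : Fin n → MvPolynomial (Fin n) ℂ, ∀ z k, f z k = MvPolynomial.eval z (P k)

open Set Metric Filter Topology Function

section Holomorphic

variable {E F : Type*} [NormedAddCommGroup E] [NormedSpace ℂ E]
  [NormedAddCommGroup F] [NormedSpace ℂ F]

theorem DifferentiableOn.eqOn_zero_of_convex_of_eventuallyEq_zero [CompleteSpace F] {f : E → F}
    {U : Set E} (hf : DifferentiableOn ℂ f U) (hUo : IsOpen U) (hUc : Convex ℝ U) {y : E}
    (hy : y ∈ U) (hfy : f =ᶠ[𝓝 y] 0) : EqOn f 0 U := by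
  intro x hx
  -- one-variable identity theorem on the complex line through `y` and `x`
  set L : ℂ → E := fun t => y + t • (x - y)
  have hL : Differentiable ℂ L := by fun_prop
  have hLU : IsPreconnected (L ⁻¹' U) :=
    ((hUc.translate_preimage_right y).linear_preimage
      ((LinearMap.toSpanSingleton ℂ E (x - y)).restrictScalars ℝ)).isPreconnected
  have hfL : AnalyticOnNhd ℂ (f ∘ L) (L ⁻¹' U) :=
    (hf.comp hL.differentiableOn (mapsTo_preimage L U)).analyticOnNhd (hUo.preimage hL.continuous)
  have hL0 : Tendsto L (𝓝 0) (𝓝 y) := by simpa [L] using hL.continuous.tendsto 0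
  simpa [L] using hfL.eqOn_zero_of_preconnected_of_eventuallyEq_zero hLU (by simpa [L])
    (hfy.comp_tendsto hL0) (show (1 : ℂ) ∈ L ⁻¹' U by simpa [L])

theorem exists_eqOn_zero_of_forall_exists_eq_zero [CompleteSpace F] {ι : Type*} [Finite ι]
    {g : ι → E → F} {U : Set E} (hUo : IsOpen U) (hUc : Convex ℝ U) (hU : U.Nonempty)
    (hg : ∀ i, DifferentiableOn ℂ (g i) U) (h : ∀ x ∈ U, ∃ i, g i x = 0) :
    ∃ i, EqOn (g i) 0 U := by
  classical
  have := Fintype.ofFinite ι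
  -- either `g a` vanishes on an open set, or we remove its zeros and continue with fewer indices
  suffices key : ∀ s : Finset ι, ∀ V ⊆ U, IsOpen V → V.Nonempty →
      (∀ x ∈ V, ∃ i ∈ s, g i x = 0) → ∃ i, EqOn (g i) 0 U from
    key univ U subset_rfl hUo hU fun x hx => by simpa using h x hx
  intro s
  induction s using Finset.induction_on with
  | empty => rintro V - - ⟨x, hx⟩ hV; simpa using hV x hx
  | insert a s _ ih =>
    intro V hVU hVo hV hVs
    by_cases ha : ∀ x ∈ V, g a x = 0
    · obtain ⟨y, hy⟩ := hV
      exact ⟨a, (hg a).eqOn_zero_of_convex_of_eventuallyEq_zero hUo hUc (hVU hy)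
        (eventually_of_mem (hVo.mem_nhds hy) ha)⟩
    obtain ⟨x₀, hx₀, hgx₀⟩ := not_forall₂.1 ha
    refine ih (V ∩ g a ⁻¹' {0}ᶜ) (inter_subset_left.trans hVU)
      (((hg a).mono hVU).continuousOn.isOpen_inter_preimage hVo isOpen_compl_singleton)
      ⟨x₀, hx₀, hgx₀⟩ fun x ⟨hx, hgx⟩ => ?_
    obtain ⟨i, hi, hix⟩ := hVs x hx
    rcases Finset.mem_insert.1 hi with rfl | hi
    · exact absurd hix hgx
    · exact ⟨i, hi, hix⟩

theorem Complex.eq_fderiv_apply_of_mapsTo_ball_of_norm_eq [StrictConvexSpace ℝ F] {f : E → F}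
    {S : E →L[ℂ] F} {R : ℝ} {z : E} (hd : DifferentiableOn ℂ f (ball 0 R))
    (hmaps : MapsTo f (ball 0 R) (closedBall 0 R)) (h₀ : f 0 = 0) (hS : HasFDerivAt f S 0)
    (hz : ‖z‖ < R) (hnorm : ‖f z‖ = ‖z‖) : f z = S z := by
  rcases eq_or_ne z 0 with rfl | hz0
  · simp [h₀]
  have hz' : 0 < ‖z‖ := norm_pos_iff.2 hz0
  -- restrict `f` to the complex line through `z`, parametrised so that `z` sits at `t = 1`
  set g : ℂ → F := fun t => f (t • z)
  have hline : MapsTo (fun t : ℂ => t • z) (ball 0 (R / ‖z‖)) (ball 0 R) := fun t ht => by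
    rw [mem_ball_zero_iff, lt_div_iff₀ hz'] at ht
    rwa [mem_ball_zero_iff, norm_smul]
  have hg0 : g 0 = 0 := by simp [g, h₀]
  have hgd : DifferentiableOn ℂ g (ball 0 (R / ‖z‖)) := hd.comp (by fun_prop) hline
  have hgmaps : MapsTo g (ball 0 (R / ‖z‖)) (closedBall (g 0) R) := hg0 ▸ hmaps.comp hline
  have h1 : (1 : ℂ) ∈ ball 0 (R / ‖z‖) := by simpa [one_lt_div hz'] using hz
  have hslope : ‖dslope g 0 1‖ = R / (R / ‖z‖) := by
    rw [dslope_of_ne _ one_ne_zero, slope_def_module]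
    simp [g, h₀, hnorm, (hz'.trans hz).ne']
  have haff := Complex.affine_of_mapsTo_ball_of_norm_dslope_eq_div hgd hgmaps h1 hslope
  have hgS : HasDerivAt g (S z) 0 := by
    have hz1 : HasDerivAt (fun t : ℂ => t • z) z 0 := by
      simpa using (hasDerivAt_id (0 : ℂ)).smul_const z
    exact hS.comp_hasDerivAt_of_eq (0 : ℂ) hz1 (zero_smul ℂ z).symm
  have hgC : HasDerivAt g (dslope g 0 1) 0 := by
    refine HasDerivAt.congr_of_eventuallyEq ?_
      (haff.eventuallyEq_of_mem (ball_mem_nhds 0 (div_pos (hz'.trans hz) hz')))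
    simpa using ((hasDerivAt_id (0 : ℂ)).smul_const (dslope g 0 1)).const_add (g 0)
  calc f z = g 1 := by simp [g]
    _ = dslope g 0 1 := by simpa [hg0] using haff h1
    _ = S z := hgC.unique hgS

theorem Complex.norm_eq_norm_of_mapsTo_ball_of_leftInvOn {f : E → F} {g : F → E} {R : ℝ}
    {z : E} (hf : DifferentiableOn ℂ f (ball 0 R)) (hg : DifferentiableOn ℂ g (ball 0 R))
    (hfB : MapsTo f (ball 0 R) (ball 0 R)) (hgB : MapsTo g (ball 0 R) (ball 0 R))
    (hinv : LeftInvOn g f (ball 0 R)) (h₀ : f 0 = 0) (hz : z ∈ ball 0 R) :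
    ‖f z‖ = ‖z‖ := by
  have hg₀ : g 0 = 0 := by simpa [h₀] using hinv (mem_ball_self (pos_of_mem_ball hz))
  refine le_antisymm (norm_le_norm_of_mapsTo_ball hf (hfB.mono_right ball_subset_closedBall) h₀
    (mem_ball_zero_iff.1 hz)) ?_
  simpa [hinv hz] using norm_le_norm_of_mapsTo_ball hg (hgB.mono_right ball_subset_closedBall) hg₀
    (mem_ball_zero_iff.1 (hfB hz))

theorem eq_fderiv_apply_and_norm_eq_of_leftInvOn_preimage_ball [StrictConvexSpace ℝ F]
    (e : E ≃L[ℂ] F) {ψ φ : E → E} {U : Set E} (hU : U = e ⁻¹' ball 0 1)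
    (hψ : DifferentiableOn ℂ ψ U) (hφ : DifferentiableOn ℂ φ U) (hψU : MapsTo ψ U U)
    (hφU : MapsTo φ U U) (hinv : LeftInvOn φ ψ U) (h₀ : ψ 0 = 0) {z : E} (hz : z ∈ U) :
    ψ z = fderiv ℂ ψ 0 z ∧ ‖e (ψ z)‖ = ‖e z‖ := by
  subst hU
  have he : MapsTo e.symm (ball 0 1) (e ⁻¹' ball 0 1) := fun x hx => by simpa using hx
  have hconj {θ : E → E} (hθ : DifferentiableOn ℂ θ (e ⁻¹' ball 0 1))
      (hθU : MapsTo θ (e ⁻¹' ball 0 1) (e ⁻¹' ball 0 1)) :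
      DifferentiableOn ℂ (e ∘ θ ∘ e.symm) (ball 0 1) ∧
        MapsTo (e ∘ θ ∘ e.symm) (ball 0 1) (ball 0 1) :=
    ⟨e.differentiable.comp_differentiableOn (hθ.comp e.symm.differentiableOn he),
      (mapsTo_preimage e _).comp (hθU.comp he)⟩
  obtain ⟨hΨd, hΨB⟩ := hconj hψ hψU
  obtain ⟨hΦd, hΦB⟩ := hconj hφ hφU
  have hinv' : LeftInvOn (e ∘ φ ∘ e.symm) (e ∘ ψ ∘ e.symm) (ball 0 1) := fun x hx => by
    simp [hinv (he hx)]
  have hΨ0 : (e ∘ ψ ∘ e.symm) 0 = 0 := by simp [h₀]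
  have hψ0 : DifferentiableAt ℂ ψ (e.symm 0) := by
    rw [map_zero]
    exact hψ.differentiableAt ((isOpen_ball.preimage e.continuous).mem_nhds (by simp))
  have hΨ : HasFDerivAt (e ∘ ψ ∘ e.symm)
      ((e : E →L[ℂ] F) ∘L fderiv ℂ ψ 0 ∘L (e.symm : F →L[ℂ] E)) 0 := by
    simpa using e.hasFDerivAt.comp 0 (hψ0.hasFDerivAt.comp 0 e.symm.hasFDerivAt)
  have hnorm :=
    Complex.norm_eq_norm_of_mapsTo_ball_of_leftInvOn hΨd hΦd hΨB hΦB hinv' hΨ0 (z := e z) hz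
  have hlin := Complex.eq_fderiv_apply_of_mapsTo_ball_of_norm_eq hΨd
    (hΨB.mono_right ball_subset_closedBall) hΨ0 hΨ (mem_ball_zero_iff.1 hz) hnorm
  simp only [comp_apply, e.symm_apply_apply, ContinuousLinearMap.comp_apply,
    ContinuousLinearEquiv.coe_coe] at hnorm hlin
  exact ⟨e.injective hlin, hnorm⟩

end Holomorphic

theorem surjective_fderiv_of_eventually_leftInverse {𝕜 E F : Type*}
    [NontriviallyNormedField 𝕜] [NormedAddCommGroup E] [NormedSpace 𝕜 E]
    [NormedAddCommGroup F] [NormedSpace 𝕜 F]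
    {f : E → F} {g : F → E} {a : E} {b : F} (hf : DifferentiableAt 𝕜 f a) (hfa : f a = b)
    (hg : DifferentiableAt 𝕜 g b) (hgf : ∀ᶠ x in 𝓝 a, g (f x) = x) :
    Surjective (fderiv 𝕜 g b) := by
  subst hfa
  have hid : (fderiv 𝕜 g (f a)).comp (fderiv 𝕜 f a) = ContinuousLinearMap.id 𝕜 E :=
    (hg.hasFDerivAt.comp a hf.hasFDerivAt).unique ((hasFDerivAt_id a).congr_of_eventuallyEq hgf)
  exact fun v => ⟨fderiv 𝕜 f a v, by simpa using DFunLike.congr_fun hid v⟩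

section LinearAlgebra

variable {R ι : Type*} [Semiring R] [Fintype ι] [DecidableEq ι]

theorem LinearMap.apply_eq_mul_of_apply_single_eq_zero (T : (ι → R) →ₗ[R] (ι → R))
    {τ : ι → ι} (hτ : ∀ i k, i ≠ k → T (Pi.single i 1) (τ k) = 0) (v : ι → R)
    (k : ι) : T v (τ k) = v k * T (Pi.single k 1) (τ k) := by
  have hsingle (i : ι) : (fun j => if i = j then (1 : R) else 0) = Pi.single i 1 := by
    funext j
    simp [Pi.single_apply, eq_comm]
  simp only [T.pi_apply_eq_sum_univ v, hsingle, Finset.sum_apply, Pi.smul_apply, smul_eq_mul]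
  exact Finset.sum_eq_single k (fun i _ hik => by rw [hτ i k hik, mul_zero]) (by simp)

theorem LinearMap.injective_of_surjective_of_apply_single_eq_zero [Nontrivial R]
    (T : (ι → R) →ₗ[R] (ι → R)) (hT : Surjective T) {τ : ι → ι}
    (hτ : ∀ i k, i ≠ k → T (Pi.single i 1) (τ k) = 0) : Injective τ := by
  intro k₁ k₂ hk
  by_contra hne
  have hc : T (Pi.single k₁ 1) (τ k₁) = 0 := hk ▸ hτ k₁ k₂ hne
  obtain ⟨v, hv⟩ := hT (Pi.single (τ k₁) 1)
  have hvk := T.apply_eq_mul_of_apply_single_eq_zero hτ v k₁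
  rw [hv, hc] at hvk
  simp at hvk

end LinearAlgebra

section UnitBall

variable {n : ℕ}

theorem unitBall_eq_preimage :
    unitBall n = (EuclideanSpace.equiv (Fin n) ℂ).symm ⁻¹' ball 0 1 := by
  ext z
  simp [unitBall, EuclideanSpace.norm_eq, Real.sqrt_lt' one_pos]

theorem isOpen_unitBall : IsOpen (unitBall n) :=
  unitBall_eq_preimage ▸ isOpen_ball.preimage (ContinuousLinearEquiv.continuous _)

theorem convex_unitBall : Convex ℝ (unitBall n) :=
  unitBall_eq_preimage ▸ (convex_ball 0 1).linear_preimage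
    ((EuclideanSpace.equiv (Fin n) ℂ).symm.toLinearMap.restrictScalars ℝ)

theorem zero_mem_unitBall : (0 : Fin n → ℂ) ∈ unitBall n := by
  simp [unitBall]

theorem exists_apply_eq_zero_on_hyperplane {ψ : (Fin n → ℂ) → (Fin n → ℂ)}
    (hψ : DifferentiableOn ℂ ψ (unitBall n)) {k : Fin n}
    (hk : ∀ z ∈ unitBall n, z k = 0 → ∃ m, ψ z m = 0) :
    ∃ m, ∀ z ∈ unitBall n, z k = 0 → ψ z m = 0 := by
  -- precompose with the projection `P` onto the hyperplane to get functions on the whole ball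
  set P : (Fin n → ℂ) → (Fin n → ℂ) := fun z => update z k 0
  have hPd : Differentiable ℂ P := differentiable_pi.2 fun j => by
    simp only [P, update_apply]
    split_ifs <;> fun_prop
  have hPB : MapsTo P (unitBall n) (unitBall n) := fun z (hz : ∑ j, ‖z j‖ ^ 2 < 1) =>
    show ∑ j, ‖P z j‖ ^ 2 < 1 from lt_of_le_of_lt (sum_le_sum fun j _ => by
      rcases eq_or_ne j k with rfl | hj <;> simp [P, *]) hz
  obtain ⟨m, hm⟩ := exists_eqOn_zero_of_forall_exists_eq_zero (g := fun m z => ψ (P z) m)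
    isOpen_unitBall convex_unitBall ⟨0, zero_mem_unitBall⟩
    (differentiableOn_pi.1 (hψ.comp hPd.differentiableOn hPB))
    fun z hz => hk (P z) (hPB hz) (by simp [P])
  refine ⟨m, fun z hz hzk => ?_⟩
  have hPz : P z = z := update_eq_self_iff.2 hzk.symm
  simpa [hPz] using hm hz

theorem fderiv_apply_single_eq_zero_of_eq_zero_on_hyperplane
    {ψ : (Fin n → ℂ) → (Fin n → ℂ)} (hψ : DifferentiableAt ℂ ψ 0) {k m i : Fin n}
    (hk : ∀ z ∈ unitBall n, z k = 0 → ψ z m = 0) (hik : i ≠ k) :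
    fderiv ℂ ψ 0 (Pi.single i 1) m = 0 := by
  have hline : HasDerivAt (fun t : ℂ => ψ (0 + t • Pi.single i 1) m)
      (fderiv ℂ ψ 0 (Pi.single i 1) m) 0 :=
    ((ContinuousLinearMap.proj (R := ℂ) (φ := fun _ : Fin n => ℂ) m).hasFDerivAt.comp 0
      hψ.hasFDerivAt).hasLineDerivAt _
  have hball : ∀ᶠ t : ℂ in 𝓝 0, 0 + t • Pi.single i 1 ∈ unitBall n := by
    refine (Continuous.tendsto (by fun_prop) 0).eventually_mem ?_
    simpa using isOpen_unitBall.mem_nhds zero_mem_unitBall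
  have hzero : (fun t : ℂ => ψ (0 + t • Pi.single i 1) m) =ᶠ[𝓝 0] fun _ => 0 :=
    hball.mono fun t ht => hk _ ht (by simp [hik.symm])
  exact hline.unique ((hasDerivAt_const 0 0).congr_of_eventuallyEq hzero)

theorem norm_eq_one_of_apply_perm_eq_mul {ψ : (Fin n → ℂ) → (Fin n → ℂ)}
    {σ : Equiv.Perm (Fin n)} {c : Fin n → ℂ}
    (hform : ∀ z ∈ unitBall n, ∀ k, ψ z (σ k) = z k * c k)
    (hnorm : ∀ z ∈ unitBall n, ‖(EuclideanSpace.equiv (Fin n) ℂ).symm (ψ z)‖ =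
      ‖(EuclideanSpace.equiv (Fin n) ℂ).symm z‖) (k : Fin n) : ‖c k‖ = 1 := by
  have hz : Pi.single k (2⁻¹ : ℂ) ∈ unitBall n := by
    norm_num [unitBall_eq_preimage]
  have hψz : ψ (Pi.single k 2⁻¹) = Pi.single (σ k) (2⁻¹ * c k) := by
    funext m
    obtain ⟨j, rfl⟩ := σ.surjective m
    rw [hform _ hz]
    rcases eq_or_ne j k with rfl | hjk <;> simp [*]
  simpa [hψz] using hnorm _ hz

theorem exists_perm_apply_eq_mul_of_coord_hyperplanes {ψ φ : (Fin n → ℂ) → (Fin n → ℂ)}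
    (hψ : DifferentiableOn ℂ ψ (unitBall n)) (hφ : DifferentiableOn ℂ φ (unitBall n))
    (hψB : MapsTo ψ (unitBall n) (unitBall n)) (hφB : MapsTo φ (unitBall n) (unitBall n))
    (hinv : InvOn ψ φ (unitBall n) (unitBall n))
    (hH : ∀ k, ∀ z ∈ unitBall n, z k = 0 → ∃ m, ψ z m = 0) :
    ∃ (σ : Equiv.Perm (Fin n)) (c : Fin n → ℂ), (∀ k, ‖c k‖ = 1) ∧
      ∀ z ∈ unitBall n, ∀ k, ψ z (σ k) = z k * c k := by
  have hB0 : unitBall n ∈ 𝓝 0 := isOpen_unitBall.mem_nhds zero_mem_unitBall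
  have hBψ0 : unitBall n ∈ 𝓝 (ψ 0) := isOpen_unitBall.mem_nhds (hψB zero_mem_unitBall)
  choose τ hτ using fun k => exists_apply_eq_zero_on_hyperplane hψ (hH k)
  set T := fderiv ℂ ψ 0
  have hT : ∀ i k, i ≠ k → T (Pi.single i 1) (τ k) = 0 := fun i k hik =>
    fderiv_apply_single_eq_zero_of_eq_zero_on_hyperplane (hψ.differentiableAt hB0) (hτ k) hik
  have hTsurj : Surjective T :=
    surjective_fderiv_of_eventually_leftInverse (hφ.differentiableAt hBψ0)
      (hinv.2 zero_mem_unitBall) (hψ.differentiableAt hB0) (eventually_of_mem hBψ0 hinv.1)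
  let σ := Equiv.ofBijective τ
    (T.toLinearMap.injective_of_surjective_of_apply_single_eq_zero hTsurj hT).bijective_of_finite
  have hψ0 : ψ 0 = 0 := funext fun m => by
    obtain ⟨k, rfl⟩ := σ.surjective m
    exact hτ k 0 zero_mem_unitBall rfl
  have hcartan {z} (hz : z ∈ unitBall n) :=
    eq_fderiv_apply_and_norm_eq_of_leftInvOn_preimage_ball (EuclideanSpace.equiv (Fin n) ℂ).symm
      unitBall_eq_preimage hψ hφ hψB hφB hinv.2 hψ0 hz
  have hform : ∀ z ∈ unitBall n, ∀ k, ψ z (σ k) = z k * T (Pi.single k 1) (σ k) :=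
    fun z hz k => (hcartan hz).1 ▸ T.toLinearMap.apply_eq_mul_of_apply_single_eq_zero hT z k
  exact ⟨σ, _, norm_eq_one_of_apply_perm_eq_mul hform fun z hz => (hcartan hz).2, hform⟩

end UnitBall

theorem ball_automorphism_preserving_nonzero_general (n : ℕ)
    (φ : (Fin n → ℂ) → (Fin n → ℂ)) (hφ : IsAutomorphismOf φ (unitBall n))
    (h : ∀ z ∈ unitBall n, (∀ j, z j ≠ 0) → ∀ j, φ z j ≠ 0) :
    ∃ (σ : Equiv.Perm (Fin n)) (ζ : Fin n → ℂ), (∀ j, ‖ζ j‖ = 1) ∧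
      ∀ z ∈ unitBall n, ∀ j, φ z j = ζ j * z (σ j) := by
  obtain ⟨hφd, hφB, ψ, hψd, hinv⟩ := hφ
  have hψB : MapsTo ψ (unitBall n) (unitBall n) := (hφB.symm hinv.symm).mapsTo
  have hψH : ∀ k, ∀ w ∈ unitBall n, w k = 0 → ∃ m, ψ w m = 0 := fun k w hw hwk => by
    by_contra! hne
    exact h _ (hψB hw) hne k (by rwa [hinv.2 hw])
  obtain ⟨σ, c, hc, hψ⟩ :=
    exists_perm_apply_eq_mul_of_coord_hyperplanes hψd hφd hψB hφB.mapsTo hinv hψH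
  refine ⟨σ, fun k => (c k)⁻¹, fun k => by simp [hc], fun w hw k => ?_⟩
  have hwk := hψ (φ w) (hφB.mapsTo hw) k
  rw [hinv.1 hw] at hwk
  rw [hwk, mul_comm (φ w k), inv_mul_cancel_left₀ (norm_ne_zero_iff.1 (by simp [hc]))]

/-- An automorphism of the unit ball `𝔹_n` mapping `𝔹_n ∩ (ℂ∖{0})ⁿ` into
`(ℂ∖{0})ⁿ` is, up to a permutation of the variables, a rotation in each
coordinate. -/
theorem ball_automorphism_preserving_nonzero (n : ℕ) (hn : 2 ≤ n)
    (φ : (Fin n → ℂ) → (Fin n → ℂ)) (hφ : IsAutomorphismOf φ (unitBall n))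
    (h : ∀ z ∈ unitBall n, (∀ j, z j ≠ 0) → ∀ j, φ z j ≠ 0) :
    ∃ (σ : Equiv.Perm (Fin n)) (ζ : Fin n → ℂ), (∀ j, ‖ζ j‖ = 1) ∧
      ∀ z ∈ unitBall n, ∀ j, φ z j = ζ j * z (σ j) :=
  ball_automorphism_preserving_nonzero_general n φ hφ h
end

section
/- Let n ≥ 2 and let l be a positive integer. There exists a unique polynomial mapping P_l : ℂⁿ → ℂⁿ such that π_n(z₁^l, …, z_n^l) = P_l(π_n(z)) for all z ∈ ℂⁿ. Moreover, for every real p > 0, P_l maps 𝔼_{p,n} onto 𝔼_{p/l,n}. -/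
open Finset

section Aux
open MvPolynomial

lemma eval_aeval_comp {n : ℕ} (z : Fin n → ℂ) (g : Fin n → MvPolynomial (Fin n) ℂ)
    (p : MvPolynomial (Fin n) ℂ) :
    eval z (aeval g p) = eval (fun i => eval z (g i)) p := by
  induction p using MvPolynomial.induction_on with
  | C a => simp
  | add p q hp hq => simp only [map_add, hp, hq]
  | mul_X p i hp => simp only [map_mul, aeval_X, eval_X, hp]

lemma piMap_eval {n : ℕ} (z : Fin n → ℂ) (k : Fin n) :
    piMap n z k = eval z (esymm (Fin n) ℂ (k.1 + 1)) := by
  simp [piMap, esymm, eval_prod]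

lemma piMap_esymm {n : ℕ} (z : Fin n → ℂ) (k : Fin n) :
    piMap n z k = (Finset.univ.val.map z).esymm (k.1 + 1) := by
  rw [Finset.esymm_map_val]; rfl

lemma piMap_surjective (n : ℕ) (hn : 0 < n) : Function.Surjective (piMap n) := by
  intro w
  set q : Polynomial ℂ :=
    ∑ k : Fin n, Polynomial.C ((-1) ^ ((k : ℕ) + 1) * w k) * Polynomial.X ^ (n - 1 - (k : ℕ))
    with hq
  have hqdeg : q.degree < (n : ℕ) := by
    refine lt_of_le_of_lt (Polynomial.degree_sum_le _ _) ?_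
    rw [Finset.sup_lt_iff (by exact_mod_cast WithBot.bot_lt_coe n)]
    intro k _
    refine lt_of_le_of_lt (Polynomial.degree_C_mul_X_pow_le _ _) ?_
    exact_mod_cast Nat.lt_of_le_of_lt (Nat.sub_le _ _) (by omega)
  set p : Polynomial ℂ := Polynomial.X ^ n + q with hp
  have hmonic : p.Monic := by
    refine (Polynomial.monic_X_pow n).add_of_left ?_
    rwa [Polynomial.degree_X_pow]
  have hpdeg : p.degree = (n : ℕ) := by
    rw [hp, Polynomial.degree_add_eq_left_of_degree_lt (by rwa [Polynomial.degree_X_pow]),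
      Polynomial.degree_X_pow]
  have hnat : p.natDegree = n := Polynomial.natDegree_eq_of_degree_eq_some hpdeg
  have hcard : Multiset.card p.roots = p.natDegree :=
    Polynomial.splits_iff_card_roots.mp (IsAlgClosed.splits p)
  have hlen : p.roots.toList.length = n := by
    rw [Multiset.length_toList, hcard, hnat]
  refine ⟨fun j => p.roots.toList.get (Fin.cast hlen.symm j), ?_⟩
  have hlist : Finset.univ.val.map (fun j : Fin n => p.roots.toList.get (Fin.cast hlen.symm j))
      = p.roots := by
    rw [Fin.univ_val_map]
    conv_rhs => rw [← Multiset.coe_toList p.roots]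
    congr 1
    apply List.ext_get (by simp [hlen])
    intro i h1 h2
    simp [List.get_ofFn]
  funext k
  rw [piMap_esymm, hlist]
  have hk1 : (k : ℕ) + 1 ≤ n := k.2
  have hle : n - 1 - (k : ℕ) ≤ p.natDegree := by omega
  have hv := Polynomial.coeff_eq_esymm_roots_of_card hcard hle
  rw [hmonic.leadingCoeff, one_mul, hnat] at hv
  have hsub : n - (n - 1 - (k : ℕ)) = (k : ℕ) + 1 := by omega
  rw [hsub] at hv
  have hcoeff : p.coeff (n - 1 - (k : ℕ)) = (-1) ^ ((k : ℕ) + 1) * w k := by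
    rw [hp, Polynomial.coeff_add, Polynomial.coeff_X_pow, if_neg (by omega), zero_add, hq,
      Polynomial.finset_sum_coeff,
      Finset.sum_eq_single_of_mem k (Finset.mem_univ k) ?_]
    · rw [Polynomial.coeff_C_mul, Polynomial.coeff_X_pow, if_pos rfl, mul_one]
    · intro j _ hjk
      rw [Polynomial.coeff_C_mul, Polynomial.coeff_X_pow, if_neg, mul_zero]
      intro h
      exact hjk (Fin.ext (by omega))
  rw [hcoeff] at hv
  have hne : ((-1 : ℂ)) ^ ((k : ℕ) + 1) ≠ 0 := pow_ne_zero _ (by norm_num)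
  exact (mul_left_cancel₀ hne hv).symm

lemma norm_pow_rpow (z : ℂ) {l : ℕ} (hl : 0 < l) (p : ℝ) :
    ‖z ^ l‖ ^ (2 * (p / (l : ℝ))) = ‖z‖ ^ (2 * p) := by
  have hl' : (l : ℝ) ≠ 0 := Nat.cast_ne_zero.2 hl.ne'
  rw [norm_pow, ← Real.rpow_natCast ‖z‖ l, ← Real.rpow_mul (norm_nonneg z)]
  congr 1
  field_simp

end Aux

/-- There is a unique polynomial mapping `P_l : ℂⁿ → ℂⁿ` with
`π_n(z₁^l, …, z_n^l) = P_l(π_n(z))`, and it maps `𝔼_{p,n}` onto `𝔼_{p/l,n}`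
for every `p > 0`. -/
theorem exists_unique_P (n : ℕ) (hn : 2 ≤ n) (l : ℕ) (hl : 0 < l) :
    ∃ P : (Fin n → ℂ) → (Fin n → ℂ),
      (IsPolynomialMap P ∧
        ∀ z : Fin n → ℂ, piMap n (fun j => z j ^ l) = P (piMap n z)) ∧
      (∀ Q : (Fin n → ℂ) → (Fin n → ℂ), IsPolynomialMap Q →
        (∀ z : Fin n → ℂ, piMap n (fun j => z j ^ l) = Q (piMap n z)) → Q = P) ∧
      ∀ p : ℝ, 0 < p → P '' symEllipsoid p n = symEllipsoid (p / l) n := by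
  classical
  have hsurj : Function.Surjective (MvPolynomial.esymmAlgHom (Fin n) ℂ n) :=
    MvPolynomial.esymmAlgHom_surjective ℂ (by simp)
  set φ : MvPolynomial (Fin n) ℂ →ₐ[ℂ] MvPolynomial (Fin n) ℂ :=
    MvPolynomial.aeval (fun j : Fin n => MvPolynomial.X j ^ l) with hφ
  set S : Fin n → MvPolynomial (Fin n) ℂ :=
    fun k => φ (MvPolynomial.esymm (Fin n) ℂ (k.1 + 1)) with hS
  have hsym : ∀ k, (S k).IsSymmetric := by
    intro k e
    have h2 : (MvPolynomial.rename (⇑e)).comp φ = φ.comp (MvPolynomial.rename (⇑e)) := by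
      apply MvPolynomial.algHom_ext
      intro i
      simp [hφ]
    have h3 : MvPolynomial.rename (⇑e) (φ (MvPolynomial.esymm (Fin n) ℂ (k.1 + 1)))
        = φ (MvPolynomial.rename (⇑e) (MvPolynomial.esymm (Fin n) ℂ (k.1 + 1))) :=
      DFunLike.congr_fun h2 _
    rw [hS]
    rw [h3, MvPolynomial.esymm_isSymmetric (Fin n) ℂ (k.1 + 1) e]
  choose R hR using fun k => hsurj ⟨S k, hsym k⟩
  set P : (Fin n → ℂ) → (Fin n → ℂ) := fun w k => MvPolynomial.eval w (R k) with hP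
  have key : ∀ z : Fin n → ℂ, piMap n (fun j => z j ^ l) = P (piMap n z) := by
    intro z
    funext k
    have h1 : (MvPolynomial.esymmAlgHom (Fin n) ℂ n (R k)).val = S k := by
      rw [hR k]
    rw [MvPolynomial.esymmAlgHom_apply] at h1
    have h2 : MvPolynomial.eval (piMap n z) (R k)
        = MvPolynomial.eval z (S k) := by
      rw [← h1, eval_aeval_comp]
      have he : piMap n z = fun i : Fin n => MvPolynomial.eval z (MvPolynomial.esymm (Fin n) ℂ (i.1 + 1)) :=
        funext fun i => piMap_eval z i
      rw [he]
    have h3 : MvPolynomial.eval z (S k) = piMap n (fun j => z j ^ l) k := by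
      rw [hS, hφ]
      simp only
      rw [eval_aeval_comp, piMap_eval]
      have he : (fun i : Fin n => MvPolynomial.eval z (MvPolynomial.X i ^ l)) = fun j => z j ^ l := by
        funext i; simp
      rw [he]
    rw [hP]
    simp only
    rw [h2, h3]
  have hsurjPi : Function.Surjective (piMap n) := piMap_surjective n (by omega)
  refine ⟨P, ⟨⟨R, fun z k => rfl⟩, key⟩, ?_, ?_⟩
  · intro Q _ hQ
    funext w
    obtain ⟨z, rfl⟩ := hsurjPi w
    rw [← hQ z, key z]
  · intro p hp
    have hl' : (l : ℝ) ≠ 0 := Nat.cast_ne_zero.2 hl.ne'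
    have hpow : (fun z : Fin n → ℂ => fun j => z j ^ l) '' ellipsoid p n
        = ellipsoid (p / l) n := by
      apply Set.Subset.antisymm
      · rintro _ ⟨z, hz, rfl⟩
        simp only [ellipsoid, Set.mem_setOf_eq] at hz ⊢
        calc ∑ j, ‖z j ^ l‖ ^ (2 * (p / (l : ℝ)))
            = ∑ j, ‖z j‖ ^ (2 * p) := by
              exact Finset.sum_congr rfl fun j _ => norm_pow_rpow (z j) hl p
          _ < 1 := hz
      · intro w hw
        choose z hz using fun j => IsAlgClosed.exists_pow_nat_eq (w j) hl
        refine ⟨z, ?_, by funext j; simp [hz j]⟩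
        simp only [ellipsoid, Set.mem_setOf_eq] at hw ⊢
        calc ∑ j, ‖z j‖ ^ (2 * p)
            = ∑ j, ‖w j‖ ^ (2 * (p / (l : ℝ))) := by
              refine Finset.sum_congr rfl fun j _ => ?_
              rw [← hz j]
              exact (norm_pow_rpow (z j) hl p).symm
          _ < 1 := hw
    rw [symEllipsoid, symEllipsoid, ← hpow, Set.image_image, Set.image_image]
    apply Set.image_congr
    intro z _
    exact (key z).symm
end

section
/- Let n ≥ 2, let p > 0 be real, and let k be a positive integer. The unique polynomial map P_k : ℂⁿ → ℂⁿ satisfying π_n(z₁^k,…,z_n^k) = P_k(π_n(z)) restricts to a proper holomorphic mapping from 𝔼_{p,n} onto 𝔼_{p/k,n}. -/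
open Finset

/-!
`P_k` intertwines `π_n` with the coordinatewise power map `z ↦ z^k`, which maps `𝔹_{p,n}` onto
`𝔹_{p/k,n}` because `|z^k|^{2p/k} = |z|^{2p}`. The gauge `∑ |z_j|^{2p}` is symmetric, hence
depends only on `π_n(z)` (a tuple is determined up to order by its elementary symmetric functions),
so `π_n(z) ∈ 𝔼_{p,n} ↔ z ∈ 𝔹_{p,n}`. Hence for `K ⊆ 𝔼_{p/k,n}` the set `𝔼_{p,n} ∩ P_k⁻¹(K)` equals
`π_n({∑ |z_j|^{2p} ≤ 1}) ∩ P_k⁻¹(K)`, a compact set intersected with a closed one when `K` is compact.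
-/

theorem IsPolynomialMap.differentiable {n : ℕ} {f : (Fin n → ℂ) → (Fin n → ℂ)}
    (hf : IsPolynomialMap f) : Differentiable ℂ f := by
  obtain ⟨P, hP⟩ := hf
  rw [differentiable_pi]
  intro k
  simp_rw [hP]
  exact fun z => ((AnalyticOnNhd.eval_mvPolynomial (P k)) z (Set.mem_univ z)).differentiableAt

theorem Multiset.eq_of_card_eq_of_esymm_eq {K : Type*} [Field K] {s t : Multiset K}
    (hcard : card s = card t) (h : ∀ j ≤ card s, s.esymm j = t.esymm j) : s = t := by
  have hprod : (s.map fun a => Polynomial.X - Polynomial.C a).prod =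
      (t.map fun a => Polynomial.X - Polynomial.C a).prod := by
    rw [prod_X_sub_X_eq_sum_esymm, prod_X_sub_X_eq_sum_esymm, ← hcard]
    exact Finset.sum_congr rfl fun j hj => by rw [h j (Nat.lt_succ_iff.mp (Finset.mem_range.mp hj))]
  simpa only [Polynomial.roots_multiset_prod_X_sub_C] using congrArg Polynomial.roots hprod

theorem map_univ_eq_of_piMap_eq {n : ℕ} {a b : Fin n → ℂ} (h : piMap n a = piMap n b) :
    univ.val.map a = univ.val.map b := by
  refine Multiset.eq_of_card_eq_of_esymm_eq (by simp) fun j hj => ?_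
  rcases j with _ | j
  · simp [Multiset.esymm]
  · simp only [Multiset.card_map, card_val, card_univ, Fintype.card_fin] at hj
    rw [Finset.esymm_map_val, Finset.esymm_map_val]
    exact congrFun h ⟨j, hj⟩

theorem sum_comp_eq_of_piMap_eq {n : ℕ} {M : Type*} [AddCommMonoid M] {a b : Fin n → ℂ}
    (h : piMap n a = piMap n b) (g : ℂ → M) : ∑ j, g (a j) = ∑ j, g (b j) := by
  simp only [← Finset.sum_map_val, ← Function.comp_apply (f := g), ← Multiset.map_map,
    map_univ_eq_of_piMap_eq h]

theorem piMap_mem_symEllipsoid_iff {n : ℕ} {p : ℝ} {z : Fin n → ℂ} :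
    piMap n z ∈ symEllipsoid p n ↔ z ∈ ellipsoid p n := by
  refine ⟨?_, fun hz => ⟨z, hz, rfl⟩⟩
  rintro ⟨w, hw, hwz⟩
  exact (sum_comp_eq_of_piMap_eq hwz fun c => ‖c‖ ^ (2 * p)).symm.trans_lt hw

theorem continuous_piMap (n : ℕ) : Continuous (piMap n) :=
  continuous_pi fun _ => continuous_finsetSum _ fun _ _ =>
    continuous_finsetProd _ fun j _ => continuous_apply j

theorem norm_pow_rpow_div {k : ℕ} (hk : 0 < k) (p : ℝ) (c : ℂ) :
    ‖c ^ k‖ ^ (2 * (p / k)) = ‖c‖ ^ (2 * p) := by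
  rw [norm_pow, ← Real.rpow_natCast, ← Real.rpow_mul (norm_nonneg c)]
  congr 1
  field_simp

theorem pow_mem_ellipsoid_iff {n k : ℕ} (hk : 0 < k) {p : ℝ} {z : Fin n → ℂ} :
    (fun j => z j ^ k) ∈ ellipsoid (p / k) n ↔ z ∈ ellipsoid p n := by
  simp only [ellipsoid, Set.mem_ofPred_eq, norm_pow_rpow_div hk]

theorem apply_piMap_mem_symEllipsoid_iff {n k : ℕ} (hk : 0 < k) {p : ℝ}
    {P : (Fin n → ℂ) → (Fin n → ℂ)}
    (hPk : ∀ z : Fin n → ℂ, piMap n (fun j => z j ^ k) = P (piMap n z)) (z : Fin n → ℂ) :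
    P (piMap n z) ∈ symEllipsoid (p / k) n ↔ piMap n z ∈ symEllipsoid p n := by
  rw [← hPk, piMap_mem_symEllipsoid_iff, pow_mem_ellipsoid_iff hk, piMap_mem_symEllipsoid_iff]

def closedEllipsoid (p : ℝ) (n : ℕ) : Set (Fin n → ℂ) :=
  {z | ∑ j, ‖z j‖ ^ (2 * p) ≤ 1}

theorem ellipsoid_subset_closedEllipsoid (p : ℝ) (n : ℕ) :
    ellipsoid p n ⊆ closedEllipsoid p n :=
  Set.ofPred_subset_ofPred.2 fun _ => le_of_lt

theorem closedEllipsoid_subset_closedBall {p : ℝ} (hp : 0 < p) (n : ℕ) :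
    closedEllipsoid p n ⊆ Metric.closedBall 0 1 := by
  intro z hz
  rw [mem_closedBall_zero_iff, pi_norm_le_iff_of_nonneg zero_le_one]
  intro j
  by_contra! hj
  have hsingle : ‖z j‖ ^ (2 * p) ≤ ∑ i, ‖z i‖ ^ (2 * p) :=
    Finset.single_le_sum (f := fun i => ‖z i‖ ^ (2 * p)) (fun _ _ => by positivity) (mem_univ j)
  exact (Real.one_lt_rpow hj (by positivity)).not_ge (hsingle.trans hz)

theorem isCompact_closedEllipsoid {p : ℝ} (hp : 0 < p) (n : ℕ) :
    IsCompact (closedEllipsoid p n) := by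
  refine Metric.isCompact_of_isClosed_isBounded ?_
    (Metric.isBounded_closedBall.subset (closedEllipsoid_subset_closedBall hp n))
  refine isClosed_le (continuous_finsetSum _ fun j _ => ?_) continuous_const
  exact (Real.continuous_rpow_const (by positivity)).comp (continuous_apply j).norm

theorem P_is_proper_general (n : ℕ) (p : ℝ) (hp : 0 < p) (k : ℕ) (hk : 0 < k)
    (P : (Fin n → ℂ) → (Fin n → ℂ)) (hP : IsPolynomialMap P)
    (hPk : ∀ z : Fin n → ℂ, piMap n (fun j => z j ^ k) = P (piMap n z)) :
    IsProperHolomorphic P (symEllipsoid p n) (symEllipsoid (p / k) n) ∧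
      P '' symEllipsoid p n = symEllipsoid (p / k) n := by
  have hmem (z : Fin n → ℂ) := apply_piMap_mem_symEllipsoid_iff hk hPk (p := p) z
  have hmaps : Set.MapsTo P (symEllipsoid p n) (symEllipsoid (p / k) n) := by
    rintro _ ⟨z, hz, rfl⟩
    exact (hmem z).2 ⟨z, hz, rfl⟩
  have hsurj : symEllipsoid (p / k) n ⊆ P '' symEllipsoid p n := by
    rintro _ ⟨u, hu, rfl⟩
    choose z hz using fun j => IsAlgClosed.exists_pow_nat_eq (u j) hk
    obtain rfl : (fun j => z j ^ k) = u := funext hz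
    exact ⟨piMap n z, ⟨z, (pow_mem_ellipsoid_iff hk).1 hu, rfl⟩, (hPk z).symm⟩
  refine ⟨⟨hP.differentiable.differentiableOn, hmaps, fun K hK hKc => ?_⟩,
    hmaps.image_subset.antisymm hsurj⟩
  have hpre : symEllipsoid p n ∩ P ⁻¹' K = piMap n '' closedEllipsoid p n ∩ P ⁻¹' K := by
    ext w
    constructor
    · rintro ⟨⟨z, hz, rfl⟩, hw⟩
      exact ⟨⟨z, ellipsoid_subset_closedEllipsoid p n hz, rfl⟩, hw⟩
    · rintro ⟨⟨z, -, rfl⟩, hw⟩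
      exact ⟨(hmem z).1 (hK hw), hw⟩
  rw [hpre]
  exact ((isCompact_closedEllipsoid hp n).image (continuous_piMap n)).inter_right
    (hKc.isClosed.preimage hP.differentiable.continuous)

/-- The polynomial map `P_k` satisfying `π_n(z^k) = P_k(π_n(z))` restricts to a
proper holomorphic mapping from `𝔼_{p,n}` onto `𝔼_{p/k,n}`. -/
theorem P_is_proper (n : ℕ) (hn : 2 ≤ n) (p : ℝ) (hp : 0 < p) (k : ℕ) (hk : 0 < k)
    (P : (Fin n → ℂ) → (Fin n → ℂ)) (hP : IsPolynomialMap P)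
    (hPk : ∀ z : Fin n → ℂ, piMap n (fun j => z j ^ k) = P (piMap n z)) :
    IsProperHolomorphic P (symEllipsoid p n) (symEllipsoid (p / k) n) ∧
      P '' symEllipsoid p n = symEllipsoid (p / k) n :=
  P_is_proper_general n p hp k hk P hP hPk
end
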